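/- Let a < b be real numbers, N ≥ 1 an integer, and x : [a,b] → ℝ twice continuously differentiable. Let B_N x be the Bernstein approximant of x of degree N on [a,b]. Then for every τ ∈ [a,b], |B_N x(τ) − x(τ)| ≤ ((b−a)²/(8N))·sup_{s∈[a,b]}|x''(s)|. -/

import Mathlib

/-- Bernstein basis polynomial of degree `N`, index `j`, on `[a,b]`:
`b_{j,N}(t) = (N choose j) (t-a)^j (b-t)^(N-j) / (b-a)^N`. -/
noncomputable def bern (a b : ℝ) (N j : ℕ) (t : ℝ) : ℝ :=
  (N.choose j : ℝ) * (t - a) ^ j * (b - t) ^ (N - j) / (b - a) ^ N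

/-- Bernstein approximant of degree `N` of `x` on `[a,b]`:
`B_N x(t) = Σ_{j=0}^N x(a + j(b−a)/N) b_{j,N}(t)`. -/
noncomputable def bernApprox (x : ℝ → ℝ) (a b : ℝ) (N : ℕ) (t : ℝ) : ℝ :=
  ∑ j ∈ Finset.range (N + 1), x (a + (j : ℝ) * (b - a) / (N : ℝ)) * bern a b N j t

/-!
At `τ` the Bernstein weights are nonnegative, sum to one and have mean `τ`, so
`B_N x(τ) - x(τ)` is the weighted average of the first-order Taylor remainders of `x` at `τ`,
evaluated at the nodes. Each remainder is at most `sup |x''| / 2 · (node - τ)²`, and the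
variance of the Bernstein weights is `(τ - a)(b - τ)/N ≤ (b - a)²/(4N)`.
-/

open Set Finset

theorem abs_sub_sub_derivWithin_mul_le {f : ℝ → ℝ} {a b M τ s : ℝ}
    (hf : ContDiffOn ℝ 2 f (Icc a b))
    (hM : ∀ y ∈ Icc a b, |iteratedDerivWithin 2 f (Icc a b) y| ≤ M)
    (hτ : τ ∈ Icc a b) (hs : s ∈ Icc a b) :
    |f s - f τ - derivWithin f (Icc a b) τ * (s - τ)| ≤ M / 2 * (s - τ) ^ 2 := by
  rcases eq_or_ne τ s with rfl | hτs
  · simp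
  have hab : a < b := by
    by_contra! h
    exact hτs (by linarith [hτ.1, hτ.2, hs.1, hs.2])
  have hIab : uIcc τ s ⊆ Icc a b := uIcc_subset_Icc hτ hs
  have hI : UniqueDiffOn ℝ (uIcc τ s) := uniqueDiffOn_Icc (min_lt_max.2 hτs)
  have hfI : ContDiffOn ℝ 2 f (uIcc τ s) := hf.mono hIab
  have hderiv_eq : ∀ k ≤ 2, ∀ y ∈ uIcc τ s,
      iteratedDerivWithin k f (uIcc τ s) y = iteratedDerivWithin k f (Icc a b) y := by
    intro k hk y hy
    simp only [iteratedDerivWithin_eq_iteratedFDerivWithin]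
    rw [iteratedFDerivWithin_subset hIab hI (uniqueDiffOn_Icc hab)
      (hf.of_le (by exact_mod_cast hk)) hy]
  obtain ⟨y, hy, hlagrange⟩ := taylor_mean_remainder_lagrange (n := 1) hτs
    (hfI.of_le (by norm_num))
    ((hfI.differentiableOn_iteratedDerivWithin (by norm_num) hI).mono uIoo_subset_uIcc_self)
  rw [taylorWithinEval_succ, taylor_within_zero_eval,
    hderiv_eq 1 (by norm_num) τ left_mem_uIcc, iteratedDerivWithin_one,
    hderiv_eq 2 le_rfl y (uIoo_subset_uIcc_self hy)] at hlagrange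
  have hremainder : f s - f τ - derivWithin f (Icc a b) τ * (s - τ)
      = iteratedDerivWithin 2 f (Icc a b) y * (s - τ) ^ 2 / 2 := by
    norm_num at hlagrange
    linarith
  have hy_bound : |iteratedDerivWithin 2 f (Icc a b) y| ≤ M := hM y (hIab (uIoo_subset_uIcc_self hy))
  rw [hremainder, abs_div, abs_mul, abs_of_nonneg (sq_nonneg (s - τ)), abs_two]
  have := mul_le_mul_of_nonneg_right hy_bound (sq_nonneg (s - τ))
  linarith

theorem abs_sum_mul_sub_le_of_abs_taylor_le {ι : Type*} {s : Finset ι} {w p : ι → ℝ}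
    {f : ℝ → ℝ} {c t M : ℝ} (hw : ∀ i ∈ s, 0 ≤ w i) (hw₁ : ∑ i ∈ s, w i = 1)
    (hmean : ∑ i ∈ s, (p i - t) * w i = 0)
    (hf : ∀ i ∈ s, |f (p i) - f t - c * (p i - t)| ≤ M * (p i - t) ^ 2) :
    |∑ i ∈ s, f (p i) * w i - f t| ≤ M * ∑ i ∈ s, (p i - t) ^ 2 * w i := by
  have hsum : ∑ i ∈ s, f (p i) * w i - f t
      = ∑ i ∈ s, (f (p i) - f t - c * (p i - t)) * w i := by
    have hsplit : ∑ i ∈ s, (f (p i) - f t - c * (p i - t)) * w i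
        = ∑ i ∈ s, f (p i) * w i - f t * ∑ i ∈ s, w i - c * ∑ i ∈ s, (p i - t) * w i := by
      rw [mul_sum, mul_sum, ← sum_sub_distrib, ← sum_sub_distrib]
      exact sum_congr rfl fun i _ => by ring
    rw [hsplit, hw₁, hmean]
    ring
  calc |∑ i ∈ s, f (p i) * w i - f t|
      ≤ ∑ i ∈ s, |f (p i) - f t - c * (p i - t)| * w i := by
        rw [hsum]
        refine (abs_sum_le_sum_abs _ _).trans_eq (sum_congr rfl fun i hi => ?_)
        rw [abs_mul, abs_of_nonneg (hw i hi)]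
    _ ≤ ∑ i ∈ s, M * (p i - t) ^ 2 * w i := by
        gcongr with i hi
        · exact hw i hi
        · exact hf i hi
    _ = M * ∑ i ∈ s, (p i - t) ^ 2 * w i := by
        simp only [mul_sum, mul_assoc]

noncomputable def bernNode (a b : ℝ) (N j : ℕ) : ℝ := a + (j : ℝ) * (b - a) / (N : ℝ)

theorem bernNode_mem_Icc {a b : ℝ} (hab : a ≤ b) {N j : ℕ} (hj : j ≤ N) :
    bernNode a b N j ∈ Icc a b := by
  have hj₀ : 0 ≤ (j : ℝ) / N := by positivity
  have hj₁ : (j : ℝ) / N ≤ 1 := div_le_one_of_le₀ (by exact_mod_cast hj) (Nat.cast_nonneg N)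
  have hnode : bernNode a b N j = a + (j / N : ℝ) * (b - a) := by unfold bernNode; ring
  rw [hnode]
  constructor <;> nlinarith

theorem bern_nonneg {a b t : ℝ} (ht : t ∈ Icc a b) (N j : ℕ) : 0 ≤ bern a b N j t :=
  div_nonneg (mul_nonneg (mul_nonneg (Nat.cast_nonneg _) (pow_nonneg (sub_nonneg.2 ht.1) _))
    (pow_nonneg (sub_nonneg.2 ht.2) _)) (pow_nonneg (sub_nonneg.2 (ht.1.trans ht.2)) _)

theorem bern_eq_eval_bernsteinPolynomial {a b : ℝ} (hab : a ≠ b) (N j : ℕ) (t : ℝ) :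
    bern a b N j t = (bernsteinPolynomial ℝ N j).eval ((t - a) / (b - a)) := by
  rcases le_or_gt j N with hj | hj
  · have hba : b - a ≠ 0 := sub_ne_zero.2 hab.symm
    have h1 : 1 - (t - a) / (b - a) = (b - t) / (b - a) := by field_simp; ring
    rw [bernsteinPolynomial, bern]
    simp only [Polynomial.eval_mul, Polynomial.eval_pow, Polynomial.eval_sub,
      Polynomial.eval_one, Polynomial.eval_X, Polynomial.eval_natCast]
    rw [h1, div_pow, div_pow, ← Nat.add_sub_cancel' hj, pow_add, Nat.add_sub_cancel_left]
    field_simp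
  · simp [bern, bernsteinPolynomial, Nat.choose_eq_zero_of_lt hj]

theorem sum_bern {a b : ℝ} (hab : a ≠ b) (N : ℕ) (t : ℝ) :
    ∑ j ∈ range (N + 1), bern a b N j t = 1 := by
  simp_rw [bern_eq_eval_bernsteinPolynomial hab, ← Polynomial.eval_finsetSum,
    bernsteinPolynomial.sum, Polynomial.eval_one]

theorem sum_bernNode_sub_mul_bern {a b : ℝ} (hab : a ≠ b) {N : ℕ} (hN : N ≠ 0) (t : ℝ) :
    ∑ j ∈ range (N + 1), (bernNode a b N j - t) * bern a b N j t = 0 := by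
  have hfirst := congrArg (Polynomial.eval ((t - a) / (b - a))) (bernsteinPolynomial.sum_smul ℝ N)
  simp only [Polynomial.eval_finsetSum, nsmul_eq_mul, Polynomial.eval_mul,
    Polynomial.eval_natCast, Polynomial.eval_X, ← bern_eq_eval_bernsteinPolynomial hab] at hfirst
  have hba : b - a ≠ 0 := sub_ne_zero.2 hab.symm
  have hN' : (N : ℝ) ≠ 0 := Nat.cast_ne_zero.2 hN
  calc ∑ j ∈ range (N + 1), (bernNode a b N j - t) * bern a b N j t
      = (b - a) / N * ∑ j ∈ range (N + 1), j * bern a b N j t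
        - (t - a) * ∑ j ∈ range (N + 1), bern a b N j t := by
        rw [mul_sum, mul_sum, ← sum_sub_distrib]
        refine sum_congr rfl fun j _ => ?_
        unfold bernNode; ring
    _ = 0 := by
        rw [hfirst, sum_bern hab]
        field_simp
        ring

theorem sum_bernNode_sub_sq_mul_bern {a b : ℝ} (hab : a ≠ b) {N : ℕ} (hN : N ≠ 0) (t : ℝ) :
    ∑ j ∈ range (N + 1), (bernNode a b N j - t) ^ 2 * bern a b N j t
      = (t - a) * (b - t) / N := by
  have hvar := congrArg (Polynomial.eval ((t - a) / (b - a))) (bernsteinPolynomial.variance ℝ N)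
  simp only [Polynomial.eval_finsetSum, nsmul_eq_mul, Polynomial.eval_mul, Polynomial.eval_pow,
    Polynomial.eval_sub, Polynomial.eval_natCast, Polynomial.eval_X, Polynomial.eval_one,
    ← bern_eq_eval_bernsteinPolynomial hab] at hvar
  have hba : b - a ≠ 0 := sub_ne_zero.2 hab.symm
  have hN' : (N : ℝ) ≠ 0 := Nat.cast_ne_zero.2 hN
  calc ∑ j ∈ range (N + 1), (bernNode a b N j - t) ^ 2 * bern a b N j t
      = ((b - a) / N) ^ 2 * ∑ j ∈ range (N + 1),
          (N * ((t - a) / (b - a)) - j) ^ 2 * bern a b N j t := by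
        rw [mul_sum]
        refine sum_congr rfl fun j _ => ?_
        unfold bernNode
        field_simp
        ring
    _ = (t - a) * (b - t) / N := by
        rw [hvar]
        field_simp
        ring

/-- for `x ∈ C²([a,b])`,
`|B_N x(τ) − x(τ)| ≤ ((b−a)²/(8N)) sup_{s∈[a,b]} |x''(s)|`. -/
theorem bernApprox_uniform_bound (a b : ℝ) (hab : a < b) (N : ℕ) (hN : 1 ≤ N)
    (x : ℝ → ℝ) (hx : ContDiffOn ℝ 2 x (Set.Icc a b))
    (τ : ℝ) (hτ : τ ∈ Set.Icc a b) :
    |bernApprox x a b N τ - x τ|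
      ≤ (b - a) ^ 2 / (8 * (N : ℝ)) *
          sSup ((fun s => |iteratedDerivWithin 2 x (Set.Icc a b) s|) '' Set.Icc a b) := by
  have hab' : a ≠ b := hab.ne
  have hN0 : N ≠ 0 := Nat.one_le_iff_ne_zero.1 hN
  set M := sSup ((fun s => |iteratedDerivWithin 2 x (Set.Icc a b) s|) '' Set.Icc a b)
  have hM : ∀ s ∈ Set.Icc a b, |iteratedDerivWithin 2 x (Set.Icc a b) s| ≤ M := by
    have hcont := (hx.continuousOn_iteratedDerivWithin le_rfl (uniqueDiffOn_Icc hab)).abs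
    exact fun s hs => le_csSup (isCompact_Icc.image_of_continuousOn hcont).bddAbove ⟨s, hs, rfl⟩
  have hM0 : 0 ≤ M := (abs_nonneg _).trans (hM τ hτ)
  have hnode : ∀ j ∈ range (N + 1), bernNode a b N j ∈ Set.Icc a b :=
    fun j hj => bernNode_mem_Icc hab.le (Nat.lt_succ_iff.1 (mem_range.1 hj))
  calc |bernApprox x a b N τ - x τ|
      ≤ M / 2 * ∑ j ∈ range (N + 1), (bernNode a b N j - τ) ^ 2 * bern a b N j τ :=
        abs_sum_mul_sub_le_of_abs_taylor_le (fun j _ => bern_nonneg hτ N j) (sum_bern hab' N τ)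
          (sum_bernNode_sub_mul_bern hab' hN0 τ)
          (fun j hj => abs_sub_sub_derivWithin_mul_le hx hM hτ (hnode j hj))
    _ = M / 2 * ((τ - a) * (b - τ) / N) := by rw [sum_bernNode_sub_sq_mul_bern hab' hN0]
    _ ≤ M / 2 * ((b - a) ^ 2 / 4 / N) := by
        gcongr
        nlinarith [sq_nonneg (τ - a - (b - τ))]
    _ = (b - a) ^ 2 / (8 * (N : ℝ)) * M := by ring
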